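/- arXiv:1811.12544 — 12 statements merged into one kernel-verified Lean document; each statement's English description precedes it below -/
import Mathlib

section
/- Let p be a prime with p ≡ 3 (mod 4) and let d ∈ F_p with d ≠ 0 and d ≠ 1. If the supersingularity condition Σ_{j=0}^{(p−1)/2} binom((p−1)/2, j)² · d^j = 0 holds in F_p, then N_d = p + 1 when χ(d) = −1, and N_d = p − 3 when χ(d) = 1. -/
open Finset

/-- The number of affine points of the Edwards curve `x² + y² = 1 + d x² y²` over `ZMod p`. -/
noncomputable def edwardsCard (p : ℕ) (d : ZMod p) : ℕ :=
  Nat.card {xy : ZMod p × ZMod p // xy.1 ^ 2 + xy.2 ^ 2 = 1 + d * xy.1 ^ 2 * xy.2 ^ 2}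

/-!
Sorting the points by `x`, the equation becomes `(1 - d x²) y² = 1 - x²`, so
`N_d = p - 1 - χ(d) + S` with `S = ∑ₓ χ((1 - x²)(1 - d x²))`; the correction `-(1 + χ(d))`
comes from the `x` with `d x² = 1`, where there is no `y` at all. By Euler's criterion
`S ≡ ∑ₓ ((1 - x²)(1 - d x²))^m (mod p)` with `m = (p - 1)/2`, and as `∑ₓ x^k` vanishes unless
`k` is a positive multiple of `p - 1`, only the coefficients of `x^(2m)` and `x^(4m)` survive:
`(-1)^m` times the Hasse sum, and `d^m ≡ χ(d)`. Supersingularity thus gives `S ≡ -χ(d)`, and as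
the terms at `x = ±1` vanish, `|S + χ(d)| < p`, so `S = -χ(d)` and `N_d = p - 1 - 2 χ(d)`.
-/

namespace FiniteField

variable {K : Type*} [Field K] [Fintype K]

theorem sum_pow_of_ne_zero {i : ℕ} (hi : i ≠ 0) :
    ∑ x : K, x ^ i = if Fintype.card K - 1 ∣ i then -1 else 0 := by
  classical
  calc ∑ x : K, x ^ i = ∑ x ∈ univ.filter (· ≠ 0), x ^ i :=
        (sum_filter_of_ne fun x _ hx => by rintro rfl; exact hx (zero_pow hi)).symm
    _ = ∑ x : {x : K // x ≠ 0}, (x : K) ^ i := sum_subtype _ (by simp) _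
    _ = ∑ x : Kˣ, (x : K) ^ i := (Fintype.sum_equiv unitsEquivNeZero _ _ fun _ => rfl).symm
    _ = _ := sum_pow_units K i

theorem sum_pow_two_mul {m s : ℕ} (hq : Fintype.card K = 2 * m + 1) (hs : s ≤ 2 * m) :
    ∑ x : K, x ^ (2 * s) = if s = m ∨ s = 2 * m then -1 else 0 := by
  have hm : m ≠ 0 := by have := Fintype.one_lt_card (α := K); omega
  rcases Nat.eq_zero_or_pos s with rfl | hs0
  · rw [if_neg (by omega)]
    simp
  have hdvd : 2 * m ∣ 2 * s ↔ s = m ∨ s = 2 * m := by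
    rw [Nat.mul_dvd_mul_iff_left two_pos]
    refine ⟨fun ⟨k, hk⟩ => ?_, by rintro (rfl | rfl) <;> simp⟩
    have : k ≤ 2 := Nat.le_of_mul_le_mul_left (by omega : m * k ≤ m * 2) (by omega)
    interval_cases k <;> omega
  rw [sum_pow_of_ne_zero (by omega), hq, Nat.add_sub_cancel]
  exact if_congr hdvd rfl rfl

end FiniteField

theorem one_sub_mul_sq_pow {R : Type*} [CommRing R] (c x : R) (m : ℕ) :
    (1 - c * x ^ 2) ^ m = ∑ i ∈ range (m + 1), (-c) ^ i * m.choose i * x ^ (2 * i) := by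
  rw [sub_eq_neg_add, add_pow]
  refine sum_congr rfl fun i _ => ?_
  rw [one_pow, pow_mul, ← neg_mul, mul_pow]
  ring

def hasseSum {R : Type*} [CommRing R] (m : ℕ) (d : R) : R :=
  ∑ j ∈ range (m + 1), (m.choose j : R) ^ 2 * d ^ j

section

variable {F : Type*} [Field F] [Fintype F]

theorem sum_even_poly_mul_even_poly {m : ℕ} (hq : Fintype.card F = 2 * m + 1) (a b : ℕ → F) :
    ∑ x : F, (∑ i ∈ range (m + 1), a i * x ^ (2 * i)) * ∑ j ∈ range (m + 1), b j * x ^ (2 * j) =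
      -(∑ j ∈ range (m + 1), a (m - j) * b j + a m * b m) := by
  have hm : m ≠ 0 := by have := Fintype.one_lt_card (α := F); omega
  calc _ = ∑ i ∈ range (m + 1), ∑ j ∈ range (m + 1), a i * b j * ∑ x : F, x ^ (2 * (i + j)) := by
        simp_rw [sum_mul_sum, mul_sum]
        rw [sum_comm]
        refine sum_congr rfl fun i _ => ?_
        rw [sum_comm]
        refine sum_congr rfl fun j _ => sum_congr rfl fun x _ => ?_
        ring
    _ = ∑ i ∈ range (m + 1), ∑ j ∈ range (m + 1),
          ((if i = m - j then -(a i * b j) else 0) +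
            if i = m then if j = m then -(a i * b j) else 0 else 0) := by
        refine sum_congr rfl fun i hi => sum_congr rfl fun j hj => ?_
        rw [mem_range] at hi hj
        rw [FiniteField.sum_pow_two_mul hq (by omega)]
        split_ifs <;> first | omega | ring
    _ = _ := by
        simp_rw [sum_add_distrib]
        rw [sum_comm]
        simp [sum_ite_eq', add_comm]

theorem sum_quartic_pow_half {m : ℕ} (hq : Fintype.card F = 2 * m + 1) (d : F) :
    ∑ x : F, ((1 - x ^ 2) * (1 - d * x ^ 2)) ^ m = -((-1) ^ m * hasseSum m d + d ^ m) := by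
  have hexpand : ∀ x : F, ((1 - x ^ 2) * (1 - d * x ^ 2)) ^ m =
      (∑ i ∈ range (m + 1), (-1) ^ i * m.choose i * x ^ (2 * i)) *
        ∑ j ∈ range (m + 1), (-d) ^ j * m.choose j * x ^ (2 * j) := fun x => by
    rw [mul_pow, ← one_sub_mul_sq_pow, ← one_sub_mul_sq_pow, one_mul]
  rw [Fintype.sum_congr _ _ hexpand, sum_even_poly_mul_even_poly hq, hasseSum, mul_sum]
  congr 2
  · refine sum_congr rfl fun j hj => ?_
    have hjm : j ≤ m := Nat.lt_succ_iff.mp (mem_range.mp hj)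
    obtain ⟨k, rfl⟩ := Nat.exists_eq_add_of_le hjm
    rw [Nat.choose_symm hjm, neg_pow d, Nat.add_sub_cancel_left]
    ring
  · rw [Nat.choose_self, Nat.cast_one, mul_one, mul_one, ← mul_pow]
    ring

end

section

variable {F : Type*} [Field F] [Fintype F] [DecidableEq F]

theorem card_mul_sq_eq (hF : ringChar F ≠ 2) {a : F} (ha : a ≠ 0) (b : F) :
    (Nat.card {y : F // a * y ^ 2 = b} : ℤ) = quadraticChar F (a * b) + 1 := by
  have hiff : ∀ y : F, a * y ^ 2 = b ↔ y ^ 2 = a * b * (a⁻¹) ^ 2 := fun y => by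
    rw [show a * b * a⁻¹ ^ 2 = a⁻¹ * b by field_simp, eq_inv_mul_iff_mul_eq₀ ha]
  have hsqrts := quadraticChar_card_sqrts hF (a * b * a⁻¹ ^ 2)
  rw [map_mul, quadraticChar_sq_one' (inv_ne_zero ha), mul_one, ← Set.ncard_eq_toFinset_card',
    ← Nat.card_coe_set_eq] at hsqrts
  rw [Nat.card_congr (Equiv.subtypeEquivRight hiff)]
  exact hsqrts

theorem card_edwards_fiber (hF : ringChar F ≠ 2) {d : F} (hd1 : d ≠ 1) (x : F) :
    (Nat.card {y : F // x ^ 2 + y ^ 2 = 1 + d * x ^ 2 * y ^ 2} : ℤ) =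
      quadraticChar F ((1 - x ^ 2) * (1 - d * x ^ 2)) + 1 - if d * x ^ 2 = 1 then 1 else 0 := by
  have hiff : ∀ y : F,
      x ^ 2 + y ^ 2 = 1 + d * x ^ 2 * y ^ 2 ↔ (1 - d * x ^ 2) * y ^ 2 = 1 - x ^ 2 := fun y => by constructor <;> intro h <;> linear_combination h
  rw [Nat.card_congr (Equiv.subtypeEquivRight hiff)]
  split_ifs with hdx
  · have hx : 1 - x ^ 2 ≠ 0 := fun hx => hd1 (by linear_combination d * hx + hdx)
    have hempty : IsEmpty {y : F // (1 - d * x ^ 2) * y ^ 2 = 1 - x ^ 2} :=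
      ⟨fun ⟨y, hy⟩ => hx (by rw [← hy, hdx, sub_self, zero_mul])⟩
    rw [Nat.card_of_isEmpty, hdx, sub_self, mul_zero, MulChar.map_zero]
    simp
  · rw [card_mul_sq_eq hF (sub_ne_zero.mpr (Ne.symm hdx)), mul_comm]
    ring

theorem card_edwards (hF : ringChar F ≠ 2) {d : F} (hd0 : d ≠ 0) (hd1 : d ≠ 1) :
    (Nat.card {xy : F × F // xy.1 ^ 2 + xy.2 ^ 2 = 1 + d * xy.1 ^ 2 * xy.2 ^ 2} : ℤ) =
      Fintype.card F + ∑ x : F, quadraticChar F ((1 - x ^ 2) * (1 - d * x ^ 2)) -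
        (quadraticChar F d + 1) := by
  have hpoles : (∑ x : F, if d * x ^ 2 = 1 then (1 : ℤ) else 0) = quadraticChar F d + 1 := by
    rw [sum_boole, ← Fintype.card_subtype, ← Nat.card_eq_fintype_card, card_mul_sq_eq hF hd0,
      mul_one]
  rw [Nat.card_congr (Equiv.subtypeProdEquivSigmaSubtype
    fun x y : F => x ^ 2 + y ^ 2 = 1 + d * x ^ 2 * y ^ 2), Nat.card_sigma, Nat.cast_sum,
    Fintype.sum_congr _ _ (card_edwards_fiber hF hd1), sum_sub_distrib, sum_add_distrib, hpoles,
    sum_const, card_univ, nsmul_one]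
  ring

theorem abs_sum_quadraticChar_le (g : F → F) {u v : F} (huv : u ≠ v) (hu : g u = 0)
    (hv : g v = 0) : |∑ x : F, quadraticChar F (g x)| ≤ Fintype.card F - 2 := by
  have hsupp : ∑ x : F, quadraticChar F (g x) =
      ∑ x ∈ (univ.erase u).erase v, quadraticChar F (g x) := by
    refine (sum_subset (subset_univ _) fun x _ hx => ?_).symm
    obtain rfl | rfl : x = v ∨ x = u := by simp at hx; tauto
    all_goals simp [hu, hv]
  have hcard : #((univ.erase u).erase v) = Fintype.card F - 2 := by
    rw [card_erase_of_mem (mem_erase.mpr ⟨huv.symm, mem_univ v⟩), card_erase_of_mem (mem_univ u),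
      card_univ, Nat.sub_sub]
  calc |∑ x : F, quadraticChar F (g x)|
      ≤ ∑ x ∈ (univ.erase u).erase v, |quadraticChar F (g x)| := hsupp ▸ abs_sum_le_sum_abs _ _
    _ ≤ #((univ.erase u).erase v) • 1 := sum_le_card_nsmul _ _ _ fun x _ => by
        rcases quadraticChar_isQuadratic F (g x) with h | h | h <;> simp [h]
    _ = Fintype.card F - 2 := by
        have := Fintype.one_lt_card (α := F)
        rw [hcard, nsmul_one]
        omega

end

theorem edwardsCard_of_hasseSum_eq_zero {p : ℕ} [Fact p.Prime] (hp2 : p ≠ 2) {d : ZMod p}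
    (hd0 : d ≠ 0) (hd1 : d ≠ 1) (hss : hasseSum ((p - 1) / 2) d = 0) :
    (edwardsCard p d : ℤ) = p - 1 - 2 * quadraticChar (ZMod p) d := by
  have hF : ringChar (ZMod p) ≠ 2 := by rwa [ZMod.ringChar_zmod_n]
  have hq : Fintype.card (ZMod p) = 2 * ((p - 1) / 2) + 1 := by
    have := (Fact.out : p.Prime).eq_two_or_odd
    rw [ZMod.card]
    omega
  have hhalf : Fintype.card (ZMod p) / 2 = (p - 1) / 2 := by omega
  set S := ∑ x : ZMod p, quadraticChar (ZMod p) ((1 - x ^ 2) * (1 - d * x ^ 2))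
  have hdvd : (p : ℤ) ∣ S + quadraticChar (ZMod p) d := by
    rw [← ZMod.intCast_zmod_eq_zero_iff_dvd]
    push_cast [S, quadraticChar_eq_pow_of_char_ne_two' hF]
    rw [hhalf, sum_quartic_pow_half hq, hss]
    ring
  have hS : S + quadraticChar (ZMod p) d = 0 := by
    refine Int.eq_zero_of_abs_lt_dvd hdvd ?_
    have hbound := abs_sum_quadraticChar_le (fun x : ZMod p => (1 - x ^ 2) * (1 - d * x ^ 2))
      (Ring.neg_one_ne_one_of_char_ne_two hF) (by ring) (by ring)
    have hχ : |(quadraticChar (ZMod p) d : ℤ)| ≤ 1 := by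
      rcases quadraticChar_dichotomy hd0 with h | h <;> simp [h]
    rw [ZMod.card] at hbound
    calc |S + quadraticChar (ZMod p) d| ≤ |S| + |(quadraticChar (ZMod p) d : ℤ)| := abs_add_le _ _
      _ < p := by linarith
  rw [edwardsCard, card_edwards hF hd0 hd1, ZMod.card]
  linarith

theorem stmt0 (p : ℕ) [Fact p.Prime] (hp : p % 4 = 3) (d : ZMod p)
    (hd0 : d ≠ 0) (hd1 : d ≠ 1)
    (hss : ∑ j ∈ range ((p - 1) / 2 + 1),
      (((p - 1) / 2).choose j : ZMod p) ^ 2 * d ^ j = 0) :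
    (legendreSym p (d.val : ℤ) = -1 → edwardsCard p d = p + 1) ∧
    (legendreSym p (d.val : ℤ) = 1 → edwardsCard p d = p - 3) := by
  have hN := edwardsCard_of_hasseSum_eq_zero (by omega) hd0 hd1 hss
  have hχ : legendreSym p (d.val : ℤ) = quadraticChar (ZMod p) d := by simp [legendreSym]
  rw [hχ]
  constructor <;> intro h <;> rw [h] at hN <;> omega
end

section
/- If p is a prime with p ≡ 3 (mod 4), then Σ_{j=0}^{(p−1)/2} 2^j · binom((p−1)/2, j)² ≡ 0 (mod p). -/
open Finset
open scoped Nat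

/-!
With `m = (p - 1) / 2`, the sum is `P_m(3)` for the Legendre polynomial
`P_m(t) = ∑ C(m,k)² ((t-1)/2)^k ((t+1)/2)^(m-k)`. The other classical form
`P_m(t) = ∑ C(m,j) C(m+j,j) ((t-1)/2)^j` gives `P_m(-3) = ∑ C(m,j) C(m+j,j) (-2)^j`, and
modulo `p = 2m + 1` we have `C(m+j,j) ≡ (-1)^j C(m,j)`, so `P_m(-3) ≡ P_m(3)`. Since `m` is odd,
`P_m(-3) = -P_m(3)`, hence `2 P_m(3) ≡ 0`.
-/

theorem Nat.add_choose_eq_sum_choose_mul_choose (n j : ℕ) :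
    (n + j).choose j = ∑ k ∈ range (j + 1), n.choose k * j.choose k := by
  rw [Nat.add_choose_eq, Finset.Nat.sum_antidiagonal_eq_sum_range_succ_mk]
  refine sum_congr rfl fun k hk => ?_
  rw [Nat.choose_symm (mem_range_succ_iff.mp hk)]

theorem sum_Ico_choose_mul_choose_mul_pow {R : Type*} [CommSemiring R] {n k : ℕ} (hk : k ≤ n)
    (x : R) :
    ∑ j ∈ Ico k (n + 1), (n.choose j * j.choose k : R) * x ^ j
      = n.choose k * x ^ k * (x + 1) ^ (n - k) := by
  rw [sum_Ico_eq_sum_range, show n + 1 - k = n - k + 1 by omega, add_pow, mul_sum]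
  refine sum_congr rfl fun i _ => ?_
  have h := Nat.choose_mul (n := n) (Nat.le_add_right k i)
  rw [Nat.add_sub_cancel_left] at h
  rw [← Nat.cast_mul, h]
  push_cast
  ring

theorem sum_choose_mul_add_choose_mul_pow {R : Type*} [CommSemiring R] (n : ℕ) (x : R) :
    ∑ j ∈ range (n + 1), (n.choose j * (n + j).choose j : R) * x ^ j
      = ∑ k ∈ range (n + 1), (n.choose k : R) ^ 2 * x ^ k * (x + 1) ^ (n - k) :=
  calc ∑ j ∈ range (n + 1), (n.choose j * (n + j).choose j : R) * x ^ j
      = ∑ j ∈ Ico 0 (n + 1), ∑ k ∈ Ico 0 (j + 1),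
          (n.choose k : R) * ((n.choose j * j.choose k : R) * x ^ j) := by
        refine sum_congr (range_eq_Ico _) fun j _ => ?_
        rw [Nat.add_choose_eq_sum_choose_mul_choose, ← range_eq_Ico, Nat.cast_sum, mul_sum,
          sum_mul]
        refine sum_congr rfl fun k _ => ?_
        push_cast
        ring
    _ = ∑ k ∈ Ico 0 (n + 1), ∑ j ∈ Ico k (n + 1),
          (n.choose k : R) * ((n.choose j * j.choose k : R) * x ^ j) :=
        (sum_Ico_Ico_comm _ _ _).symm
    _ = ∑ k ∈ range (n + 1), (n.choose k : R) ^ 2 * x ^ k * (x + 1) ^ (n - k) := by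
        refine sum_congr (range_eq_Ico _).symm fun k hk => ?_
        rw [← mul_sum, sum_Ico_choose_mul_choose_mul_pow (mem_range_succ_iff.mp hk)]
        ring

/-- If `m + 1 = -m`, the rising factorial `(m + 1) ⋯ (m + j)` is `(-1)^j m (m - 1) ⋯ (m - j + 1)`. -/
theorem factorial_mul_add_choose_of_two_mul_add_one_eq_zero {R : Type*} [CommRing R] {m : ℕ}
    (hm : (2 * m + 1 : R) = 0) (j : ℕ) :
    (j ! * (m + j).choose j : R) = (-1) ^ j * (j ! * m.choose j) := by
  have hm' : ((m + 1 : ℕ) : R) = -m := by push_cast; linear_combination hm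
  rw [← Nat.cast_mul, ← Nat.ascFactorial_eq_factorial_mul_choose,
    ← ascPochhammer_nat_eq_natCast_ascFactorial, hm', ascPochhammer_eval_neg_eq_descPochhammer,
    descPochhammer_eval_eq_descFactorial, Nat.descFactorial_eq_factorial_mul_choose, Nat.cast_mul]

theorem sum_choose_sq_mul_neg_two_pow_of_odd {R : Type*} [CommRing R] {n : ℕ} (hn : Odd n) :
    ∑ k ∈ range (n + 1), (n.choose k : R) ^ 2 * (-2) ^ k * (-2 + 1) ^ (n - k)
      = -∑ k ∈ range (n + 1), 2 ^ k * (n.choose k : R) ^ 2 := by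
  rw [← sum_neg_distrib]
  refine sum_congr rfl fun k hk => ?_
  have hsign : (-1 : R) ^ k * (-1) ^ (n - k) = -1 := by
    rw [← pow_add, Nat.add_sub_cancel' (mem_range_succ_iff.mp hk), hn.neg_one_pow]
  rw [neg_pow (2 : R)]
  linear_combination (2 : R) ^ k * (n.choose k : R) ^ 2 * hsign

theorem ZMod.add_choose_eq_neg_one_pow_mul_choose {p m j : ℕ} [Fact p.Prime]
    (hm : (2 * m + 1 : ZMod p) = 0) (hj : j < p) :
    ((m + j).choose j : ZMod p) = (-1) ^ j * m.choose j := by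
  have hfact : (j ! : ZMod p) ≠ 0 := by
    rw [Ne, ZMod.natCast_eq_zero_iff, Nat.Prime.dvd_factorial Fact.out]
    omega
  apply mul_left_cancel₀ hfact
  rw [factorial_mul_add_choose_of_two_mul_add_one_eq_zero hm]
  ring

theorem stmt3 (p : ℕ) (hp : p.Prime) (hp4 : p % 4 = 3) :
    (∑ j ∈ range ((p - 1) / 2 + 1), 2 ^ j * ((p - 1) / 2).choose j ^ 2) ≡ 0 [MOD p] := by
  have := Fact.mk hp
  set m := (p - 1) / 2
  have hm_odd : Odd m := Nat.odd_iff.mpr (by omega)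
  have hm : (2 * m + 1 : ZMod p) = 0 := by
    exact_mod_cast (ZMod.natCast_eq_zero_iff _ p).mpr ⟨1, by omega⟩
  rw [← ZMod.natCast_eq_natCast_iff]
  push_cast
  set S := ∑ j ∈ range (m + 1), (2 : ZMod p) ^ j * (m.choose j : ZMod p) ^ 2
  have hmod_p : ∑ j ∈ range (m + 1), (m.choose j * (m + j).choose j : ZMod p) * (-2) ^ j = S := by
    refine sum_congr rfl fun j hj => ?_
    rw [ZMod.add_choose_eq_neg_one_pow_mul_choose hm (by have := mem_range_succ_iff.mp hj; omega),
      neg_pow (2 : ZMod p)]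
    linear_combination (2 ^ j * (m.choose j : ZMod p) ^ 2) *
      (Even.neg_one_pow ⟨j, rfl⟩ : (-1 : ZMod p) ^ (j + j) = 1)
  have hS_eq_neg : S = -S := hmod_p.symm.trans <|
    (sum_choose_mul_add_choose_mul_pow m _).trans (sum_choose_sq_mul_neg_two_pow_of_odd hm_odd)
  linear_combination S * hm - (m : ZMod p) * hS_eq_neg
end

section
/- Let p be prime. If p ≡ 3 (mod 8), then the Edwards curve with coefficient d = 2 has N_2 = p + 1 affine points over F_p; if p ≡ 7 (mod 8), then N_2 = p − 3. -/
/-!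
Writing `u = x²`, `v = y²`, each `u` has `1 + χ(u)` square roots, and the curve becomes the graph
of the involution `v = (1 - u)/(1 - d u)` on `u ≠ 1/d`. Expanding `(1 + χ(u))(1 + χ(v))` over this
graph gives `N_d = q - 1 - 2χ(d) + ∑ χ(u (1 - u) (1 - d u))`. For `d = 2` the substitution
`u ↦ 1 - u` multiplies the cubic by `-1`, so its character sum vanishes once `χ(-1) = -1`, i.e.
`p ≡ 3 (mod 4)`; what remains is `N_2 = p - 1 - 2χ(2)` with `χ(2) = ∓1` for `p ≡ 3, 7 (mod 8)`.
-/

open Finset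

section EdwardsMap

variable {F : Type*} [Field F] {d u : F}

/-- In the coordinates `u = x²`, `v = y²` the Edwards curve becomes the graph
`v = edwardsMap d u`; the swap `x ↔ y` makes this map an involution. -/
def edwardsMap (d u : F) : F := (1 - u) / (1 - d * u)

theorem add_eq_one_add_mul_iff (hu : d * u ≠ 1) (v : F) :
    u + v = 1 + d * u * v ↔ v = edwardsMap d u := by
  rw [edwardsMap, eq_div_iff (sub_ne_zero.2 hu.symm)]
  constructor <;> intro h <;> linear_combination h

theorem add_ne_one_add_mul (hd : d ≠ 1) (hu : d * u = 1) (v : F) :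
    u + v ≠ 1 + d * u * v := by
  intro h
  have hu1 : u = 1 := by linear_combination h + v * hu
  exact hd (by simpa [hu1] using hu)

theorem mul_edwardsMap_ne_one (hd : d ≠ 1) (hu : d * u ≠ 1) : d * edwardsMap d u ≠ 1 := by
  rw [edwardsMap, mul_div_assoc', ne_eq, div_eq_one_iff_eq (sub_ne_zero.2 hu.symm)]
  intro h
  exact hd (by linear_combination h)

theorem edwardsMap_edwardsMap (hd : d ≠ 1) (hu : d * u ≠ 1) :
    edwardsMap d (edwardsMap d u) = u := by
  have h1 : 1 - d * u ≠ 0 := sub_ne_zero.2 hu.symm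
  have num : 1 - edwardsMap d u = u * (1 - d) / (1 - d * u) := by
    rw [edwardsMap, eq_div_iff h1, sub_mul, div_mul_cancel₀ _ h1]; ring
  have den : 1 - d * edwardsMap d u = (1 - d) / (1 - d * u) := by
    rw [edwardsMap, eq_div_iff h1, sub_mul, mul_div_assoc', div_mul_cancel₀ _ h1]; ring
  nth_rw 1 [edwardsMap]
  rw [num, den, div_div_div_cancel_right₀ h1, mul_div_cancel_right₀ _ (sub_ne_zero.2 hd.symm)]

end EdwardsMap

section EdwardsCount

variable {F : Type*} [Field F] [Fintype F] [DecidableEq F] {d : F}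

local notation "χ" => quadraticChar F

theorem quadraticChar_div (a b : F) : χ (a / b) = χ (a * b) := by
  rw [div_eq_mul_inv, map_mul, map_mul, ← MulChar.inv_apply', (quadraticChar_isQuadratic F).inv]

theorem sum_comp_sq_eq_sum_quadraticChar (hF : ringChar F ≠ 2) (g : F → ℤ) :
    ∑ x, g (x ^ 2) = ∑ u, (χ u + 1) * g u := by
  rw [← sum_fiberwise' univ (· ^ 2) g]
  refine sum_congr rfl fun u _ => ?_
  rw [sum_const, ← quadraticChar_card_sqrts hF u, nsmul_eq_mul, Set.toFinset_ofPred]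

theorem card_edwards_eq_sum (hF : ringChar F ≠ 2) :
    (Nat.card {xy : F × F // xy.1 ^ 2 + xy.2 ^ 2 = 1 + d * xy.1 ^ 2 * xy.2 ^ 2} : ℤ) =
      ∑ u, (χ u + 1) * ∑ v, (χ v + 1) * if u + v = 1 + d * u * v then 1 else 0 := by
  rw [Nat.card_eq_fintype_card, Fintype.card_subtype, card_filter, Nat.cast_sum,
    Fintype.sum_prod_type, ← sum_comp_sq_eq_sum_quadraticChar hF]
  refine sum_congr rfl fun x _ => ?_
  rw [← sum_comp_sq_eq_sum_quadraticChar hF]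
  push_cast
  rfl

theorem sum_edwards_fiber (hd : d ≠ 1) (u : F) :
    ∑ v, (χ v + 1) * (if u + v = 1 + d * u * v then 1 else 0) =
      if d * u = 1 then 0 else χ (edwardsMap d u) + 1 := by
  split_ifs with hu
  · simp [add_ne_one_add_mul hd hu]
  · simp [add_eq_one_add_mul_iff hu]

theorem mem_erase_inv_iff (hd : d ≠ 0) {u : F} : u ∈ univ.erase d⁻¹ ↔ d * u ≠ 1 := by
  rw [mem_erase, and_iff_left (mem_univ u), ne_eq, ne_eq, mul_eq_one_iff_inv_eq₀ hd, eq_comm]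

theorem card_edwards_eq_sum_erase (hF : ringChar F ≠ 2) (hd0 : d ≠ 0) (hd1 : d ≠ 1) :
    (Nat.card {xy : F × F // xy.1 ^ 2 + xy.2 ^ 2 = 1 + d * xy.1 ^ 2 * xy.2 ^ 2} : ℤ) =
      ∑ u ∈ univ.erase d⁻¹, (χ u + 1) * (χ (edwardsMap d u) + 1) := by
  rw [card_edwards_eq_sum hF, ← sum_erase univ (a := d⁻¹)
    (by rw [sum_edwards_fiber hd1, if_pos (mul_inv_cancel₀ hd0), mul_zero])]
  refine sum_congr rfl fun u hu => ?_
  rw [sum_edwards_fiber hd1, if_neg ((mem_erase_inv_iff hd0).1 hu)]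

theorem sum_erase_inv_quadraticChar (hF : ringChar F ≠ 2) :
    ∑ u ∈ univ.erase d⁻¹, χ u = -χ d := by
  rw [sum_erase_eq_sub (mem_univ _), quadraticChar_sum_zero hF, ← MulChar.inv_apply',
    (quadraticChar_isQuadratic F).inv, zero_sub]

theorem sum_erase_inv_quadraticChar_edwardsMap (hd0 : d ≠ 0) (hd1 : d ≠ 1) :
    ∑ u ∈ univ.erase d⁻¹, χ (edwardsMap d u) = ∑ u ∈ univ.erase d⁻¹, χ u := by
  have hmaps : ∀ u ∈ univ.erase d⁻¹, edwardsMap d u ∈ univ.erase d⁻¹ := fun u hu =>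
    (mem_erase_inv_iff hd0).2 (mul_edwardsMap_ne_one hd1 ((mem_erase_inv_iff hd0).1 hu))
  have hinv : ∀ u ∈ univ.erase d⁻¹, edwardsMap d (edwardsMap d u) = u := fun u hu =>
    edwardsMap_edwardsMap hd1 ((mem_erase_inv_iff hd0).1 hu)
  exact sum_nbij' _ _ hmaps hmaps hinv hinv fun u _ => rfl

theorem card_edwards_eq (hF : ringChar F ≠ 2) (hd0 : d ≠ 0) (hd1 : d ≠ 1) :
    (Nat.card {xy : F × F // xy.1 ^ 2 + xy.2 ^ 2 = 1 + d * xy.1 ^ 2 * xy.2 ^ 2} : ℤ) =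
      Fintype.card F - 1 - 2 * χ d + ∑ u, χ (u * (1 - u) * (1 - d * u)) := by
  have hexpand : ∀ u, (χ u + 1) * (χ (edwardsMap d u) + 1) =
      χ (u * (1 - u) * (1 - d * u)) + χ u + χ (edwardsMap d u) + 1 := fun u => by
    rw [edwardsMap, quadraticChar_div, mul_assoc u, map_mul χ u]; ring
  have hcubic : ∑ u ∈ univ.erase d⁻¹, χ (u * (1 - u) * (1 - d * u)) =
      ∑ u, χ (u * (1 - u) * (1 - d * u)) :=
    sum_erase _ (by rw [mul_inv_cancel₀ hd0, sub_self, mul_zero, MulChar.map_zero])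
  have hcard : ∑ _u ∈ univ.erase d⁻¹, (1 : ℤ) = Fintype.card F - 1 := by
    rw [sum_const, card_erase_of_mem (mem_univ _), card_univ, nsmul_one,
      Nat.cast_pred Fintype.card_pos]
  simp only [card_edwards_eq_sum_erase hF hd0 hd1, hexpand, sum_add_distrib, hcubic, hcard,
    sum_erase_inv_quadraticChar_edwardsMap hd0 hd1, sum_erase_inv_quadraticChar hF]
  ring

theorem sum_quadraticChar_mul_one_sub_mul_one_sub_two_mul (hχ : χ (-1) = -1) :
    ∑ u, χ (u * (1 - u) * (1 - 2 * u)) = 0 := by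
  have hreflect : ∑ u, χ (u * (1 - u) * (1 - 2 * u)) = -∑ u, χ (u * (1 - u) * (1 - 2 * u)) := by
    rw [← sum_neg_distrib]
    refine Fintype.sum_equiv (Equiv.subLeft 1) _ _ fun u => ?_
    rw [Equiv.subLeft_apply,
      show (1 - u) * (1 - (1 - u)) * (1 - 2 * (1 - u)) = -1 * (u * (1 - u) * (1 - 2 * u)) by ring,
      map_mul χ (-1), hχ]
    ring
  linarith

end EdwardsCount

open ZMod in
theorem edwardsCard_two_of_mod_four_eq_three {p : ℕ} [Fact p.Prime] (hp : p % 4 = 3) :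
    (edwardsCard p 2 : ℤ) = p - 1 - 2 * χ₈ p := by
  have hF : ringChar (ZMod p) ≠ 2 := by rw [ringChar_zmod_n]; omega
  have hχ : quadraticChar (ZMod p) (-1) = -1 := by
    rw [quadraticChar_neg_one hF, ZMod.card, χ₄_nat_three_mod_four hp]
  rw [edwardsCard, card_edwards_eq hF (Ring.two_ne_zero hF)
    (fun h => one_ne_zero (by linear_combination h)), ZMod.card,
    quadraticChar_two hF, ZMod.card, sum_quadraticChar_mul_one_sub_mul_one_sub_two_mul hχ, add_zero]

theorem stmt4 (p : ℕ) [Fact p.Prime] :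
    (p % 8 = 3 → edwardsCard p (2 : ZMod p) = p + 1) ∧
    (p % 8 = 7 → edwardsCard p (2 : ZMod p) = p - 3) := by
  refine ⟨fun hp8 => ?_, fun hp8 => ?_⟩ <;>
  · have h := edwardsCard_two_of_mod_four_eq_three (p := p) (by omega)
    rw [ZMod.χ₈_nat_eq_if_mod_eight] at h
    split_ifs at h <;> omega
end

section
/- Let p be an odd prime and d ∈ F_p with d ≠ 0 and d ≠ 1. Then, as elements of F_p, N_d ≡ (−1)^{(p+1)/2} · Σ_{j=0}^{(p−1)/2} binom((p−1)/2, j)² · d^j − 1 − 2·χ(d) (mod p). -/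
/-
Splitting the curve into fibres over `x`, the count is `∑ₓ #{y | (1 - d x²) y² = 1 - x²}`, and by
Euler's criterion the number of solutions of `a y² = b` is `1 + (a b)^m - [a = 0]` in `F_q`, where
`q = 2m + 1`. The main term `∑ₓ ((1 - d x²)(1 - x²))^m` sums a polynomial in `x²` of degree `q - 1`
over `F_q`; as `∑ₓ x^k` vanishes unless `k` is a positive multiple of `q - 1`, where it is `-1`,
only the middle coefficient `(-1)^m ∑ⱼ C(m, j)² dʲ` and the leading coefficient `dᵐ` survive.
The correction `∑ₓ [d x² = 1]` is again a square-root count, `1 + dᵐ = 1 + χ(d)`.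
-/

open Finset

open Polynomial

namespace Polynomial

variable {R : Type*} [CommRing R]

theorem coeff_one_sub_C_mul_X_pow (a : R) (m j : ℕ) :
    ((1 - C a * X) ^ m).coeff j = m.choose j * (-a) ^ j := by
  rw [show (1 - C a * X : R[X]) = C (-a) * X + 1 by rw [C_neg]; ring, add_pow, finsetSum_coeff]
  simp only [one_pow, mul_one, mul_pow, ← C_pow, coeff_mul_natCast, coeff_C_mul_X_pow, ite_mul,
    zero_mul, sum_ite_eq, mem_range]
  split_ifs with hj
  · ring
  · simp [Nat.choose_eq_zero_of_lt (by omega : m < j)]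

theorem coeff_one_sub_X_pow (m j : ℕ) :
    ((1 - X) ^ m : R[X]).coeff j = m.choose j * (-1) ^ j := by
  simpa using coeff_one_sub_C_mul_X_pow (1 : R) m j

theorem natDegree_one_sub_C_mul_X_pow_le (a : R) (m : ℕ) :
    ((1 - C a * X) ^ m).natDegree ≤ m := by
  compute_degree!

theorem natDegree_one_sub_X_pow_le (m : ℕ) :
    ((1 - X) ^ m : R[X]).natDegree ≤ m := by
  compute_degree!

theorem coeff_one_sub_X_pow_mul_one_sub_C_mul_X_pow_self (d : R) (m : ℕ) :
    ((1 - X) ^ m * (1 - C d * X) ^ m).coeff m =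
      (-1) ^ m * ∑ j ∈ range (m + 1), (m.choose j : R) ^ 2 * d ^ j := by
  rw [coeff_mul, ← Nat.sum_antidiagonal_swap, Nat.sum_antidiagonal_eq_sum_range_succ_mk, mul_sum]
  refine sum_congr rfl fun j hj => ?_
  have hjm : j ≤ m := Nat.lt_succ_iff.mp (mem_range.mp hj)
  have hsign : (-1 : R) ^ m = (-1) ^ (m - j) * (-1) ^ j := by
    rw [← pow_add, Nat.sub_add_cancel hjm]
  rw [Prod.swap_prod_mk, coeff_one_sub_X_pow, coeff_one_sub_C_mul_X_pow, Nat.choose_symm hjm,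
    neg_pow d, hsign]
  ring

theorem coeff_one_sub_X_pow_mul_one_sub_C_mul_X_pow_two_mul (d : R) (m : ℕ) :
    ((1 - X) ^ m * (1 - C d * X) ^ m).coeff (2 * m) = d ^ m := by
  rw [two_mul, coeff_mul_add_eq_of_natDegree_le (natDegree_one_sub_X_pow_le m)
    (natDegree_one_sub_C_mul_X_pow_le d m), coeff_one_sub_X_pow, coeff_one_sub_C_mul_X_pow]
  simp [← mul_pow]

end Polynomial

namespace FiniteField

variable {K : Type*} [Field K] [Fintype K]

theorem sum_pow (i : ℕ) :
    ∑ x : K, x ^ i = if i ≠ 0 ∧ Fintype.card K - 1 ∣ i then -1 else 0 := by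
  classical
  rcases eq_or_ne i 0 with rfl | hi
  · simp
  · calc ∑ x : K, x ^ i = ∑ x ∈ {0}ᶜ, x ^ i := by
          rw [Fintype.sum_eq_add_sum_compl 0, zero_pow hi, zero_add]
      _ = ∑ x : {x : K // x ≠ 0}, (x : K) ^ i := sum_subtype _ (by simp) _
      _ = ∑ x : Kˣ, (x : K) ^ i := (Fintype.sum_equiv unitsEquivNeZero _ _ fun _ => rfl).symm
      _ = _ := by rw [sum_pow_units, if_congr (and_iff_right hi).symm rfl rfl]

theorem card_sub_one_eq_two_mul_card_div_two (hK : ringChar K ≠ 2) :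
    Fintype.card K - 1 = 2 * (Fintype.card K / 2) := by
  have := odd_card_of_char_ne_two hK
  omega

theorem sum_sq_pow (hK : ringChar K ≠ 2) {k : ℕ} (hk : k ≤ Fintype.card K - 1) :
    ∑ x : K, (x ^ 2) ^ k =
      -((if k = Fintype.card K / 2 then 1 else 0) + if k = Fintype.card K - 1 then 1 else 0) := by
  have hq := card_sub_one_eq_two_mul_card_div_two hK
  have hm : Fintype.card K / 2 ≠ 0 := by have := Fintype.one_lt_card (α := K); omega
  simp_rw [← pow_mul]
  rw [sum_pow, hq]
  rw [hq] at hk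
  set m := Fintype.card K / 2
  have hmk : 2 * k ≠ 0 ∧ 2 * m ∣ 2 * k ↔ k = m ∨ k = 2 * m := by
    rw [Nat.mul_dvd_mul_iff_left two_pos]
    constructor
    · rintro ⟨hk0, c, rfl⟩
      have hc : c ≤ 2 := by nlinarith [Nat.pos_of_ne_zero hm]
      interval_cases c <;> omega
    · rintro (rfl | rfl) <;> simp [hm]
  rw [if_congr hmk rfl rfl]
  split_ifs <;> first | omega | norm_num

theorem sum_eval_sq (hK : ringChar K ≠ 2) {f : K[X]} (hf : f.natDegree ≤ Fintype.card K - 1) :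
    ∑ x : K, f.eval (x ^ 2) = -(f.coeff (Fintype.card K / 2) + f.coeff (Fintype.card K - 1)) := by
  have hlt : f.natDegree < Fintype.card K - 1 + 1 := Nat.lt_succ_of_le hf
  simp_rw [eval_eq_sum_range' hlt]
  rw [sum_comm]
  simp_rw [← mul_sum]
  rw [sum_congr rfl fun k hk => by rw [sum_sq_pow hK (Nat.lt_succ_iff.mp (mem_range.mp hk))]]
  simp only [mul_neg, mul_add, mul_ite, mul_one, mul_zero, sum_neg_distrib, sum_add_distrib,
    sum_ite_eq', mem_range]
  rw [if_pos (by omega), if_pos (by omega)]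

theorem cast_card_filter_mul_sq_eq [DecidableEq K] (hK : ringChar K ≠ 2) (a b : K) :
    (#{y : K | a * y ^ 2 = b} : K) =
      1 + (a * b) ^ (Fintype.card K / 2) - if a = 0 then 1 else 0 := by
  have hm : Fintype.card K / 2 ≠ 0 := by have := Fintype.one_lt_card (α := K); omega
  rcases eq_or_ne a 0 with rfl | ha
  · rcases eq_or_ne b 0 with rfl | hb
    · simp [zero_pow hm]
    · simp [zero_pow hm, hb.symm]
  · have hsqrt := congrArg (Int.cast : ℤ → K) (quadraticChar_card_sqrts hK (b / a))
    rw [Set.toFinset_ofPred, Int.cast_add, Int.cast_natCast, Int.cast_one,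
      quadraticChar_eq_pow_of_char_ne_two' hK] at hsqrt
    have hfilter : univ.filter (fun y : K => a * y ^ 2 = b) = univ.filter (· ^ 2 = b / a) := by
      ext y
      simp only [mem_filter, mem_univ, true_and, eq_div_iff ha, mul_comm a]
    have hpow : (b / a) ^ (Fintype.card K / 2) = (a * b) ^ (Fintype.card K / 2) := by
      rw [show a * b = b / a * a ^ 2 by field_simp, mul_pow, ← pow_mul,
        ← card_sub_one_eq_two_mul_card_div_two hK, pow_card_sub_one_eq_one a ha, mul_one]
    rw [hfilter, hsqrt, hpow, if_neg ha, sub_zero, add_comm]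

theorem sum_one_sub_mul_sq_mul_one_sub_sq_pow (hK : ringChar K ≠ 2) (d : K) :
    ∑ x : K, ((1 - d * x ^ 2) * (1 - x ^ 2)) ^ (Fintype.card K / 2) =
      (-1) ^ (Fintype.card K / 2 + 1) *
          ∑ j ∈ range (Fintype.card K / 2 + 1), ((Fintype.card K / 2).choose j : K) ^ 2 * d ^ j
        - d ^ (Fintype.card K / 2) := by
  set m := Fintype.card K / 2
  have hq := card_sub_one_eq_two_mul_card_div_two hK
  have hdeg : ((1 - X) ^ m * (1 - C d * X) ^ m).natDegree ≤ Fintype.card K - 1 :=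
    hq ▸ two_mul m ▸ natDegree_mul_le_of_le (natDegree_one_sub_X_pow_le m)
      (natDegree_one_sub_C_mul_X_pow_le d m)
  have hsum := sum_eval_sq hK hdeg
  rw [hq, coeff_one_sub_X_pow_mul_one_sub_C_mul_X_pow_self,
    coeff_one_sub_X_pow_mul_one_sub_C_mul_X_pow_two_mul] at hsum
  simp only [eval_mul, eval_pow, eval_sub, eval_one, eval_X, eval_C] at hsum
  simp_rw [mul_pow, mul_comm ((1 - d * _) ^ m), hsum]
  ring

theorem card_edwards_eq_sum_card_fiber [DecidableEq K] (d : K) :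
    Nat.card {xy : K × K // xy.1 ^ 2 + xy.2 ^ 2 = 1 + d * xy.1 ^ 2 * xy.2 ^ 2} =
      ∑ x : K, #{y : K | (1 - d * x ^ 2) * y ^ 2 = 1 - x ^ 2} := by
  rw [Nat.card_eq_fintype_card, Fintype.card_subtype, card_filter, Fintype.sum_prod_type]
  refine sum_congr rfl fun x _ => ?_
  rw [card_filter]
  refine sum_congr rfl fun y _ => if_congr ?_ rfl rfl
  constructor <;> intro h <;> linear_combination h

theorem cast_card_edwards_eq [DecidableEq K] (hK : ringChar K ≠ 2) {d : K} (hd : d ≠ 0) :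
    (Nat.card {xy : K × K // xy.1 ^ 2 + xy.2 ^ 2 = 1 + d * xy.1 ^ 2 * xy.2 ^ 2} : K) =
      (-1) ^ (Fintype.card K / 2 + 1) *
          ∑ j ∈ range (Fintype.card K / 2 + 1), ((Fintype.card K / 2).choose j : K) ^ 2 * d ^ j
        - 1 - 2 * (quadraticChar K d : K) := by
  have hsing :
      ∑ x : K, (if 1 - d * x ^ 2 = 0 then 1 else 0 : K) = 1 + d ^ (Fintype.card K / 2) := by
    have := cast_card_filter_mul_sq_eq hK d 1
    rw [natCast_card_filter, if_neg hd, sub_zero, mul_one] at this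
    simp_rw [sub_eq_zero, eq_comm (a := (1 : K))]
    exact this
  rw [card_edwards_eq_sum_card_fiber, Nat.cast_sum]
  simp_rw [cast_card_filter_mul_sq_eq hK]
  rw [sum_sub_distrib, sum_add_distrib, sum_const, card_univ, nsmul_one, cast_card_eq_zero,
    sum_one_sub_mul_sq_mul_one_sub_sq_pow hK, hsing, quadraticChar_eq_pow_of_char_ne_two' hK]
  ring

end FiniteField

theorem stmt6_general (p : ℕ) [Fact p.Prime] (hp : p ≠ 2) (d : ZMod p)
    (hd0 : d ≠ 0) :
    (edwardsCard p d : ZMod p) =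
      (-1 : ZMod p) ^ ((p + 1) / 2) *
        (∑ j ∈ range ((p - 1) / 2 + 1),
          (((p - 1) / 2).choose j : ZMod p) ^ 2 * d ^ j)
      - 1 - 2 * ((legendreSym p (d.val : ℤ) : ℤ) : ZMod p) := by
  have hK : ringChar (ZMod p) ≠ 2 := (ZMod.ringChar_zmod_n p).symm ▸ hp
  have hodd : p % 2 = 1 := Nat.odd_iff.mp ((Fact.out : p.Prime).odd_of_ne_two hp)
  have hleg : ((legendreSym p (d.val : ℤ) : ℤ) : ZMod p) = quadraticChar (ZMod p) d := by
    simp [legendreSym, ZMod.natCast_val, ZMod.cast_id]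
  rw [edwardsCard, FiniteField.cast_card_edwards_eq hK hd0, ZMod.card, hleg,
    show (p - 1) / 2 = p / 2 by omega, show (p + 1) / 2 = p / 2 + 1 by omega]

theorem stmt6 (p : ℕ) [Fact p.Prime] (hp : p ≠ 2) (d : ZMod p)
    (hd0 : d ≠ 0) (hd1 : d ≠ 1) :
    (edwardsCard p d : ZMod p) =
      (-1 : ZMod p) ^ ((p + 1) / 2) *
        (∑ j ∈ range ((p - 1) / 2 + 1),
          (((p - 1) / 2).choose j : ZMod p) ^ 2 * d ^ j)
      - 1 - 2 * ((legendreSym p (d.val : ℤ) : ℤ) : ZMod p) :=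
  stmt6_general p hp d hd0
end

section
/- Let p be an odd prime and d ∈ F_p with d ≠ 0 and d ≠ 1. Then M_d = N_d + 1 + χ(d), where χ(d) ∈ {1, −1} is the Legendre symbol of d (as an integer). -/
open Finset

/-- The number of points `(x, y)` over `ZMod p` with `y² = (x² - 1)(d x² - 1)`. -/
noncomputable def mCard (p : ℕ) (d : ZMod p) : ℕ :=
  Nat.card {xy : ZMod p × ZMod p //
    xy.2 ^ 2 = (xy.1 ^ 2 - 1) * (d * xy.1 ^ 2 - 1)}

section Aux

variable {p : ℕ} [Fact p.Prime]

lemma sqrt_card (hp : p ≠ 2) (a : ZMod p) :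
    (Nat.card {y : ZMod p // y ^ 2 = a} : ℤ) = quadraticChar (ZMod p) a + 1 := by
  have hchar : ringChar (ZMod p) ≠ 2 := by
    rw [ZMod.ringChar_zmod_n]; exact hp
  have h := quadraticChar_card_sqrts hchar a
  rw [Set.toFinset_card, ← Nat.card_eq_fintype_card] at h
  rw [Nat.card_congr (Equiv.subtypeEquivRight (fun (y : ZMod p) =>
      show y ∈ {x : ZMod p | x ^ 2 = a} ↔ y ^ 2 = a from Iff.rfl))] at h
  exact h

lemma card_fibers (P : ZMod p × ZMod p → Prop) [DecidablePred P] :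
    Nat.card {xy : ZMod p × ZMod p // P xy}
      = ∑ x : ZMod p, Nat.card {y : ZMod p // P (x, y)} := by
  simp only [Nat.card_eq_fintype_card]
  rw [Fintype.card_congr ((Equiv.subtypeEquivRight (fun xy => by simp)).trans
    (Equiv.subtypeProdEquivSigmaSubtype (fun a b => P (a, b))))]
  simp

lemma fiber_eq (hp : p ≠ 2) {d : ZMod p} (hd1 : d ≠ 1) (x : ZMod p) :
    (Nat.card {y : ZMod p // y ^ 2 = (x ^ 2 - 1) * (d * x ^ 2 - 1)} : ℤ)
      = (Nat.card {y : ZMod p // x ^ 2 + y ^ 2 = 1 + d * x ^ 2 * y ^ 2} : ℤ)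
        + (if d * x ^ 2 = 1 then 1 else 0) := by
  by_cases h : d * x ^ 2 = 1
  · rw [if_pos h]
    have h1 : (x ^ 2 - 1) * (d * x ^ 2 - 1) = 0 := by rw [h]; ring
    have hE : IsEmpty {y : ZMod p // x ^ 2 + y ^ 2 = 1 + d * x ^ 2 * y ^ 2} := by
      constructor
      rintro ⟨y, hy⟩
      apply hd1
      have hx2 : x ^ 2 = 1 := by linear_combination hy + y ^ 2 * h
      calc d = d * x ^ 2 := by rw [hx2]; ring
        _ = 1 := h
    have hE' : Nat.card {y : ZMod p // x ^ 2 + y ^ 2 = 1 + d * x ^ 2 * y ^ 2} = 0 :=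
      @Nat.card_of_isEmpty _ hE
    rw [hE', sqrt_card hp, h1]
    simp
  · rw [if_neg h]
    have hu : (1 : ZMod p) - d * x ^ 2 ≠ 0 := sub_ne_zero_of_ne (Ne.symm h)
    have hequiv : {y : ZMod p // x ^ 2 + y ^ 2 = 1 + d * x ^ 2 * y ^ 2}
        ≃ {y : ZMod p // y ^ 2 = (1 - x ^ 2) * (1 - d * x ^ 2)⁻¹} := by
      refine Equiv.subtypeEquivRight (fun y => ?_)
      rw [eq_mul_inv_iff_mul_eq₀ hu]
      constructor <;> intro hh <;> linear_combination hh
    rw [Nat.card_congr hequiv, sqrt_card hp, sqrt_card hp]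
    have h2 : (x ^ 2 - 1) * (d * x ^ 2 - 1)
        = (1 - x ^ 2) * (1 - d * x ^ 2)⁻¹ * (1 - d * x ^ 2) ^ 2 := by
      field_simp
      ring
    rw [h2, map_mul, map_pow, quadraticChar_sq_one hu]
    ring

end Aux

theorem stmt7 (p : ℕ) [Fact p.Prime] (hp : p ≠ 2) (d : ZMod p)
    (hd0 : d ≠ 0) (hd1 : d ≠ 1) :
    (mCard p d : ℤ) = (edwardsCard p d : ℤ) + 1 + legendreSym p (d.val : ℤ) := by
  have hM : (mCard p d : ℤ)
      = ∑ x : ZMod p,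
        (Nat.card {y : ZMod p // y ^ 2 = (x ^ 2 - 1) * (d * x ^ 2 - 1)} : ℤ) := by
    rw [mCard, card_fibers (fun xy => xy.2 ^ 2 = (xy.1 ^ 2 - 1) * (d * xy.1 ^ 2 - 1))]
    push_cast
    rfl
  have hN : (edwardsCard p d : ℤ)
      = ∑ x : ZMod p,
        (Nat.card {y : ZMod p // x ^ 2 + y ^ 2 = 1 + d * x ^ 2 * y ^ 2} : ℤ) := by
    rw [edwardsCard,
      card_fibers (fun xy => xy.1 ^ 2 + xy.2 ^ 2 = 1 + d * xy.1 ^ 2 * xy.2 ^ 2)]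
    push_cast
    rfl
  have hsum : ∑ x : ZMod p, (if d * x ^ 2 = 1 then (1 : ℤ) else 0)
      = 1 + quadraticChar (ZMod p) d := by
    have hiff : ∀ x : ZMod p, d * x ^ 2 = 1 ↔ x ^ 2 = d⁻¹ := by
      intro x
      rw [inv_eq_one_div, eq_div_iff hd0, mul_comm]
    have : ∑ x : ZMod p, (if d * x ^ 2 = 1 then (1 : ℤ) else 0)
        = (Nat.card {x : ZMod p // x ^ 2 = d⁻¹} : ℤ) := by
      rw [Nat.card_eq_fintype_card, Fintype.card_subtype]
      simp only [Finset.sum_boole, hiff]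
    rw [this, sqrt_card hp]
    have hdinv : d⁻¹ = d * (d⁻¹) ^ 2 := by field_simp
    rw [hdinv, map_mul, map_pow, quadraticChar_sq_one (inv_ne_zero hd0)]
    ring
  have hleg : (legendreSym p (d.val : ℤ) : ℤ) = quadraticChar (ZMod p) d := by
    rw [legendreSym]
    norm_num
  rw [hM, hN, hleg]
  calc ∑ x : ZMod p,
        (Nat.card {y : ZMod p // y ^ 2 = (x ^ 2 - 1) * (d * x ^ 2 - 1)} : ℤ)
      = ∑ x : ZMod p,
        ((Nat.card {y : ZMod p // x ^ 2 + y ^ 2 = 1 + d * x ^ 2 * y ^ 2} : ℤ)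
          + (if d * x ^ 2 = 1 then 1 else 0)) := by
        exact Finset.sum_congr rfl (fun x _ => fiber_eq hp hd1 x)
    _ = (∑ x : ZMod p,
        (Nat.card {y : ZMod p // x ^ 2 + y ^ 2 = 1 + d * x ^ 2 * y ^ 2} : ℤ))
        + ∑ x : ZMod p, (if d * x ^ 2 = 1 then (1 : ℤ) else 0) := by
        rw [Finset.sum_add_distrib]
    _ = _ := by rw [hsum]; ring
end

section
/- Let p be an odd prime and d ∈ F_p with d ≠ 0 and d ≠ 1. Then, as elements of F_p, M_d ≡ (−1)^{(p+1)/2} · Σ_{j=0}^{(p−1)/2} binom((p−1)/2, j)² · d^j − χ(d) (mod p). -/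
/-!
Over `𝔽_p` an element `a` has `1 + a ^ m` square roots modulo `p`, where `m = (p - 1) / 2`, so
`M_d ≡ ∑ₓ f(x) ^ m` with `f(x) = (x² - 1)(d x² - 1)`. Summing a monomial `x ^ k` over `𝔽_p`
gives `-1` if `0 < k` and `p - 1 ∣ k`, and `0` otherwise. Writing `f(x) ^ m` as a polynomial of
degree `2m` in `x²`, only the coefficients of `x^(2m)` and `x^(4m)` survive: they are
`(-1) ^ m ∑ⱼ C(m, j)² dʲ` and `d ^ m ≡ χ(d)`.
-/

open Finset

open Polynomial

namespace Polynomial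

variable {R : Type*} [CommRing R]

theorem coeff_X_sub_one_pow (m k : ℕ) :
    ((X - 1 : R[X]) ^ m).coeff k = (-1) ^ (m - k) * m.choose k := by
  rw [← coeff_X_add_C_pow, C_neg, C_1, sub_eq_add_neg]

theorem coeff_C_mul_X_sub_one_pow (d : R) (m k : ℕ) :
    ((C d * X - 1) ^ m).coeff k = d ^ k * (-1) ^ (m - k) * m.choose k := by
  have hcomp : (C d * X - 1) ^ m = ((X - 1 : R[X]) ^ m).comp (C d * X) := by
    simp [pow_comp, sub_comp]
  rw [hcomp, comp_C_mul_X_coeff, coeff_X_sub_one_pow]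
  ring

theorem coeff_X_sub_one_pow_mul_C_mul_X_sub_one_pow (d : R) (m : ℕ) :
    ((X - 1) ^ m * (C d * X - 1) ^ m).coeff m =
      (-1) ^ m * ∑ j ∈ range (m + 1), (m.choose j : R) ^ 2 * d ^ j := by
  rw [coeff_mul, ← Nat.sum_antidiagonal_swap, Nat.sum_antidiagonal_eq_sum_range_succ_mk, mul_sum]
  refine sum_congr rfl fun j hj => ?_
  have hj : j ≤ m := Nat.lt_succ_iff.mp (mem_range.mp hj)
  have hsign : (-1 : R) ^ m = (-1) ^ j * (-1) ^ (m - j) := by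
    rw [← pow_add, Nat.add_sub_cancel' hj]
  rw [Prod.swap_prod_mk, coeff_X_sub_one_pow, coeff_C_mul_X_sub_one_pow, Nat.sub_sub_self hj,
    Nat.choose_symm hj, hsign]
  ring

theorem coeff_X_sub_one_mul_C_mul_X_sub_one_pow_two_mul (d : R) (m : ℕ) :
    (((X - 1) * (C d * X - 1)) ^ m).coeff (2 * m) = d ^ m := by
  rw [mul_comm 2, coeff_pow_of_natDegree_le (by compute_degree), ← one_add_one_eq_two,
    coeff_mul_add_eq_of_natDegree_le (by compute_degree) (by compute_degree)]
  simp [coeff_one]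

end Polynomial

namespace FiniteField

variable {K : Type*} [Field K] [Fintype K]

theorem sum_pow_eq_ite (k : ℕ) :
    ∑ x : K, x ^ k = if k ≠ 0 ∧ Fintype.card K - 1 ∣ k then -1 else 0 := by
  classical
  rcases eq_or_ne k 0 with rfl | hk
  · simp
  have hunits : ∑ x : K, x ^ k = ∑ x : Kˣ, (x : K) ^ k := by
    rw [← Fintype.sum_subtype_add_sum_subtype (· ≠ 0), ← Equiv.sum_comp unitsEquivNeZero,
      Fintype.sum_eq_zero (fun x : {x : K // ¬x ≠ 0} => x.1 ^ k)
        fun x => by rw [not_not.mp x.2, zero_pow hk], add_zero]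
    rfl
  simp [hunits, sum_pow_units, hk]

theorem sum_eval_sq_s8 {m : ℕ} (hK : Fintype.card K = 2 * m + 1) {P : K[X]}
    (hP : P.natDegree ≤ 2 * m) :
    ∑ x : K, P.eval (x ^ 2) = -(P.coeff m + P.coeff (2 * m)) := by
  classical
  have hm : m ≠ 0 := by
    have := Fintype.one_lt_card (α := K)
    omega
  have hpow (i : ℕ) (hi : i ∈ range (2 * m + 1)) :
      ∑ x : K, (x ^ 2) ^ i = if i ∈ ({m, 2 * m} : Finset ℕ) then -1 else 0 := by
    simp only [← pow_mul, sum_pow_eq_ite, hK, Nat.add_sub_cancel, mul_ne_zero_iff, ne_eq,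
      OfNat.ofNat_ne_zero, not_false_eq_true, true_and, Nat.mul_dvd_mul_iff_left two_pos,
      mem_insert, mem_singleton]
    congr 1
    rw [mem_range] at hi
    refine propext ⟨fun ⟨_, c, hc⟩ => ?_, by rintro (rfl | rfl) <;> simp [hm]⟩
    subst hc
    have : c < 3 := Nat.lt_of_mul_lt_mul_left (a := m) (by omega)
    interval_cases c <;> omega
  have hsub : ({m, 2 * m} : Finset ℕ) ⊆ range (2 * m + 1) := by
    intro i
    simp only [mem_insert, mem_singleton, mem_range]
    omega
  calc ∑ x : K, P.eval (x ^ 2)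
      = ∑ i ∈ range (2 * m + 1), P.coeff i * ∑ x : K, (x ^ 2) ^ i := by
        simp only [eval_eq_sum_range' (Nat.lt_succ_of_le hP), mul_sum]
        exact sum_comm
    _ = -(P.coeff m + P.coeff (2 * m)) := by
        rw [sum_congr rfl fun i hi => congrArg (P.coeff i * ·) (hpow i hi)]
        simp_rw [mul_ite, mul_neg_one, mul_zero]
        rw [sum_ite_mem, inter_eq_right.mpr hsub, sum_pair (by omega), neg_add]

theorem natCast_card_sq_eq_pow_add_one (hK : ringChar K ≠ 2) (a : K) :
    (Nat.card {y : K // y ^ 2 = a} : K) = a ^ (Fintype.card K / 2) + 1 := by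
  classical
  have h := quadraticChar_card_sqrts hK a
  rw [Set.toFinset_card, ← Nat.card_eq_fintype_card] at h
  rw [← quadraticChar_eq_pow_of_char_ne_two' hK]
  exact_mod_cast congrArg (Int.cast : ℤ → K) h

theorem natCast_card_graph_sq_eq_sum_pow (hK : ringChar K ≠ 2) (f : K → K) :
    (Nat.card {xy : K × K // xy.2 ^ 2 = f xy.1} : K) = ∑ x, f x ^ (Fintype.card K / 2) := by
  classical
  rw [Nat.card_congr (Equiv.subtypeProdEquivSigmaSubtype fun x y => y ^ 2 = f x),
    Nat.card_sigma]
  push_cast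
  simp only [natCast_card_sq_eq_pow_add_one hK, sum_add_distrib]
  simp

end FiniteField

open FiniteField in
theorem stmt8_general (p : ℕ) [Fact p.Prime] (hp : p ≠ 2) (d : ZMod p) :
    (mCard p d : ZMod p) =
      (-1 : ZMod p) ^ ((p + 1) / 2) *
        (∑ j ∈ range ((p - 1) / 2 + 1),
          (((p - 1) / 2).choose j : ZMod p) ^ 2 * d ^ j)
      - ((legendreSym p (d.val : ℤ) : ℤ) : ZMod p) := by
  obtain ⟨m, rfl⟩ := (Fact.out : p.Prime).odd_of_ne_two hp
  have hchar : ringChar (ZMod (2 * m + 1)) ≠ 2 := by rwa [ZMod.ringChar_zmod_n]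
  have hcard : Fintype.card (ZMod (2 * m + 1)) = 2 * m + 1 := ZMod.card _
  have hhalf : (2 * m + 1) / 2 = m := by omega
  have hlegendre : ((legendreSym (2 * m + 1) d.val : ℤ) : ZMod (2 * m + 1)) = d ^ m := by
    rw [legendreSym.eq_pow, hhalf]
    simp
  calc (mCard (2 * m + 1) d : ZMod (2 * m + 1))
      = ∑ x, (((X - 1) * (C d * X - 1)) ^ m).eval (x ^ 2) := by
        rw [mCard, natCast_card_graph_sq_eq_sum_pow hchar fun x => (x ^ 2 - 1) * (d * x ^ 2 - 1),
          hcard, hhalf]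
        simp
    _ = -((((X - 1) * (C d * X - 1)) ^ m).coeff m +
          (((X - 1) * (C d * X - 1)) ^ m).coeff (2 * m)) :=
        sum_eval_sq_s8 hcard (by compute_degree; omega)
    _ = _ := by
        rw [coeff_X_sub_one_mul_C_mul_X_sub_one_pow_two_mul, mul_pow,
          coeff_X_sub_one_pow_mul_C_mul_X_sub_one_pow, hlegendre,
          show (2 * m + 1 - 1) / 2 = m by omega, show (2 * m + 1 + 1) / 2 = m + 1 by omega]
        ring

theorem stmt8 (p : ℕ) [Fact p.Prime] (hp : p ≠ 2) (d : ZMod p)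
    (hd0 : d ≠ 0) (hd1 : d ≠ 1) :
    (mCard p d : ZMod p) =
      (-1 : ZMod p) ^ ((p + 1) / 2) *
        (∑ j ∈ range ((p - 1) / 2 + 1),
          (((p - 1) / 2).choose j : ZMod p) ^ 2 * d ^ j)
      - ((legendreSym p (d.val : ℤ) : ℤ) : ZMod p) :=
  stmt8_general p hp d
end

section
/- Let p be an odd prime and d ∈ F_p with d ≠ 0 and d ≠ 1. If d is a nonzero square in F_p, then the Edwards curves with coefficients d and d^{−1} have the same number of affine points over F_p: N_d = N_{d^{−1}}. -/
theorem stmt10 (p : ℕ) [Fact p.Prime] (hp : p ≠ 2) (d : ZMod p)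
    (hd0 : d ≠ 0) (hd1 : d ≠ 1) (hsq : IsSquare d) :
    edwardsCard p d = edwardsCard p d⁻¹ := by
  obtain ⟨c, hc⟩ := hsq
  have hc0 : c ≠ 0 := by rintro rfl; exact hd0 (by simpa using hc)
  apply Nat.card_congr
  refine
    { toFun := fun q =>
        ⟨(if q.1.2 = 0 then q.1.1 else c * q.1.1, q.1.2⁻¹), ?_⟩
      invFun := fun q =>
        ⟨(if q.1.2 = 0 then q.1.1 else c⁻¹ * q.1.1, q.1.2⁻¹), ?_⟩
      left_inv := ?_
      right_inv := ?_ }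
  · obtain ⟨⟨x, y⟩, h⟩ := q
    simp only at h ⊢
    by_cases hy : y = 0
    · subst hy
      simp only [if_pos rfl, inv_zero]
      simpa using h
    · rw [if_neg hy]
      have hyu : y * y⁻¹ = 1 := mul_inv_cancel₀ hy
      have hde : d * d⁻¹ = 1 := mul_inv_cancel₀ hd0
      linear_combination (-(y⁻¹ ^ 2)) * h + (1 - d * x ^ 2) * (y * y⁻¹ + 1) * hyu +
        (-(x ^ 2 * y⁻¹ ^ 2)) * hde + (d⁻¹ * x ^ 2 * y⁻¹ ^ 2 - x ^ 2) * hc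
  · obtain ⟨⟨x, y⟩, h⟩ := q
    simp only at h ⊢
    by_cases hy : y = 0
    · subst hy
      simp only [if_pos rfl, inv_zero]
      simpa using h
    · rw [if_neg hy]
      have hyu : y * y⁻¹ = 1 := mul_inv_cancel₀ hy
      have hdb : d * (c⁻¹) ^ 2 = 1 := by
        rw [hc]; field_simp
      have heb : d⁻¹ = (c⁻¹) ^ 2 := by
        rw [hc, mul_inv, sq]
      linear_combination (-(y⁻¹ ^ 2)) * h + (1 - d⁻¹ * x ^ 2) * (y * y⁻¹ + 1) * hyu +
        (-(x ^ 2)) * heb + (-(x ^ 2 * y⁻¹ ^ 2)) * hdb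
  · rintro ⟨⟨x, y⟩, h⟩
    ext
    · simp only
      by_cases hy : y = 0
      · simp [hy]
      · rw [if_neg hy, if_neg (inv_ne_zero hy)]
        field_simp
    · simp
  · rintro ⟨⟨x, y⟩, h⟩
    ext
    · simp only
      by_cases hy : y = 0
      · simp [hy]
      · rw [if_neg hy, if_neg (inv_ne_zero hy)]
        field_simp
    · simp
end

section
/- Let p be an odd prime and d ∈ F_p with d ≠ 0 and d ≠ 1. If d is not a square in F_p, then the numbers of affine points of the Edwards curves with coefficients d and d^{−1} satisfy N_d + N_{d^{−1}} = 2p + 2 (a twist relation). -/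
section Aux

open Finset

variable {p : ℕ} [Fact p.Prime]

local notation "χ" => quadraticChar (ZMod p)

lemma sqcount (hp : p ≠ 2) (c : ZMod p) :
    (Nat.card {x : ZMod p // x ^ 2 = c} : ℤ) = χ c + 1 := by
  have hc : ringChar (ZMod p) ≠ 2 := by
    rw [ZMod.ringChar_zmod_n]; exact hp
  have h := quadraticChar_card_sqrts hc c
  have h2 : Nat.card {x : ZMod p // x ^ 2 = c} = {x : ZMod p | x ^ 2 = c}.toFinset.card := by
    rw [Nat.card_eq_fintype_card, Set.toFinset_card]
    exact Fintype.card_congr (Equiv.refl _)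
  rw [h2, h]

lemma fiber (hp : p ≠ 2) {e : ZMod p} (he : ∀ z : ZMod p, 1 - e * z ^ 2 ≠ 0) (y : ZMod p) :
    (Nat.card {x : ZMod p // x ^ 2 + y ^ 2 = 1 + e * x ^ 2 * y ^ 2} : ℤ)
      = χ ((1 - y ^ 2) * (1 - e * y ^ 2)) + 1 := by
  have h1 : 1 - e * y ^ 2 ≠ 0 := he y
  have key : ∀ x : ZMod p, (x ^ 2 + y ^ 2 = 1 + e * x ^ 2 * y ^ 2) ↔
      x ^ 2 = (1 - y ^ 2) * (1 - e * y ^ 2)⁻¹ := by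
    intro x
    rw [eq_mul_inv_iff_mul_eq₀ h1]
    constructor <;> intro h <;> linear_combination h
  rw [Nat.card_congr (Equiv.subtypeEquivRight key), sqcount hp]
  have hv : (1 - y ^ 2) * (1 - e * y ^ 2)⁻¹
      = ((1 - y ^ 2) * (1 - e * y ^ 2)) * ((1 - e * y ^ 2)⁻¹) ^ 2 := by
    field_simp
  rw [hv, map_mul, quadraticChar_sq_one' (inv_ne_zero h1), mul_one]

lemma edwards_eq (hp : p ≠ 2) {e : ZMod p} (he : ∀ z : ZMod p, 1 - e * z ^ 2 ≠ 0) :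
    (edwardsCard p e : ℤ) = p + ∑ y : ZMod p, χ ((1 - y ^ 2) * (1 - e * y ^ 2)) := by
  have equiv1 : {xy : ZMod p × ZMod p // xy.1 ^ 2 + xy.2 ^ 2 = 1 + e * xy.1 ^ 2 * xy.2 ^ 2} ≃
      Σ y : ZMod p, {x : ZMod p // x ^ 2 + y ^ 2 = 1 + e * x ^ 2 * y ^ 2} :=
    { toFun := fun s => ⟨s.1.2, s.1.1, s.2⟩
      invFun := fun s => ⟨(s.2.1, s.1), s.2.2⟩
      left_inv := fun s => rfl
      right_inv := fun s => rfl }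
  rw [edwardsCard, Nat.card_congr equiv1, Nat.card_eq_fintype_card, Fintype.card_sigma]
  push_cast
  rw [Finset.sum_congr rfl (fun y _ => by
    rw [← Nat.card_eq_fintype_card, fiber hp he y])]
  rw [Finset.sum_add_distrib, Finset.sum_const, Finset.card_univ, ZMod.card]
  push_cast
  ring

end Aux

theorem stmt11 (p : ℕ) [Fact p.Prime] (hp : p ≠ 2) (d : ZMod p)
    (hd0 : d ≠ 0) (hd1 : d ≠ 1) (hsq : ¬ IsSquare d) :
    edwardsCard p d + edwardsCard p d⁻¹ = 2 * p + 2 := by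
  have hχd : quadraticChar (ZMod p) d = -1 :=
    quadraticChar_neg_one_iff_not_isSquare.mpr hsq
  have hdi0 : d⁻¹ ≠ 0 := inv_ne_zero hd0
  have he1 : ∀ z : ZMod p, 1 - d * z ^ 2 ≠ 0 := by
    intro z h
    have hz : z ≠ 0 := by
      rintro rfl; simp at h
    apply hsq
    have hd : d = (z⁻¹) * (z⁻¹) := by
      have hzz : d * z ^ 2 = 1 := by linear_combination -h
      field_simp
      linear_combination hzz
    exact ⟨z⁻¹, hd⟩
  have he2 : ∀ z : ZMod p, 1 - d⁻¹ * z ^ 2 ≠ 0 := by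
    intro z h
    apply hsq
    have hd : d = z * z := by
      have hzz : d⁻¹ * z ^ 2 = 1 := by linear_combination -h
      have := congrArg (· * d) hzz
      simp only [one_mul] at this
      calc d = d⁻¹ * z ^ 2 * d := this.symm ▸ rfl
        _ = z * z := by field_simp
    exact ⟨z, hd⟩
  have h1 := edwards_eq hp he1
  have h2 := edwards_eq hp he2
  set χ := quadraticChar (ZMod p)
  have hχdi : χ d⁻¹ = -1 := by
    have hv : d⁻¹ = d * (d⁻¹) ^ 2 := by field_simp
    rw [hv, map_mul, quadraticChar_sq_one' hdi0, mul_one, hχd]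
  -- rewrite the second sum
  have step1 : ∀ y : ZMod p, χ ((1 - y ^ 2) * (1 - d⁻¹ * y ^ 2))
      = - χ ((1 - y ^ 2) * (d - y ^ 2)) := by
    intro y
    have hv : (1 - y ^ 2) * (1 - d⁻¹ * y ^ 2) = d⁻¹ * ((1 - y ^ 2) * (d - y ^ 2)) := by
      field_simp; try ring
    rw [hv, map_mul, hχdi, neg_one_mul]
  have hsum : (∑ y : ZMod p, χ ((1 - y ^ 2) * (1 - d * y ^ 2)))
      + (∑ y : ZMod p, χ ((1 - y ^ 2) * (1 - d⁻¹ * y ^ 2))) = 2 := by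
    simp_rw [step1, Finset.sum_neg_distrib]
    have hsplit1 : ∑ y : ZMod p, χ ((1 - y ^ 2) * (1 - d * y ^ 2))
        = χ ((1 - (0:ZMod p) ^ 2) * (1 - d * 0 ^ 2))
          + ∑ y ∈ Finset.univ.erase (0 : ZMod p), χ ((1 - y ^ 2) * (1 - d * y ^ 2)) :=
      (Finset.add_sum_erase _ _ (Finset.mem_univ 0)).symm
    have hsplit2 : ∑ y : ZMod p, χ ((1 - y ^ 2) * (d - y ^ 2))
        = χ ((1 - (0:ZMod p) ^ 2) * (d - 0 ^ 2))
          + ∑ y ∈ Finset.univ.erase (0 : ZMod p), χ ((1 - y ^ 2) * (d - y ^ 2)) :=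
      (Finset.add_sum_erase _ _ (Finset.mem_univ 0)).symm
    have hbij : ∑ y ∈ Finset.univ.erase (0 : ZMod p), χ ((1 - y ^ 2) * (1 - d * y ^ 2))
        = ∑ y ∈ Finset.univ.erase (0 : ZMod p), χ ((1 - y ^ 2) * (d - y ^ 2)) := by
      apply Finset.sum_nbij' (fun y => y⁻¹) (fun y => y⁻¹)
      · intro a ha
        simp only [Finset.mem_erase, Finset.mem_univ, and_true] at ha ⊢
        exact inv_ne_zero ha
      · intro a ha
        simp only [Finset.mem_erase, Finset.mem_univ, and_true] at ha ⊢
        exact inv_ne_zero ha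
      · intro a _; exact inv_inv a
      · intro a _; exact inv_inv a
      · intro y hy
        simp only [Finset.mem_erase, Finset.mem_univ, and_true] at hy
        have hv : (1 - (y⁻¹) ^ 2) * (d - (y⁻¹) ^ 2)
            = ((1 - y ^ 2) * (1 - d * y ^ 2)) * ((y⁻¹) ^ 2) ^ 2 := by
          field_simp; try ring
        symm
        rw [hv, map_mul, quadraticChar_sq_one' (pow_ne_zero 2 (inv_ne_zero hy)), mul_one]
    rw [hsplit1, hsplit2, hbij]
    simp only [ne_eq, OfNat.ofNat_ne_zero, not_false_eq_true, zero_pow, mul_zero, sub_zero,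
      one_mul, mul_one, map_one, hχd]
    ring
  have key : (edwardsCard p d + edwardsCard p d⁻¹ : ℤ) = 2 * p + 2 := by
    push_cast
    rw [h1, h2]
    linarith [hsum]
  exact_mod_cast key
end

section
/- Let F be a field of characteristic ≠ 2, let d ∈ F with d ≠ 1, and let (x, y) ∈ F × F satisfy x² + y² = 1 + d·x²·y² with x ≠ −1 and y ≠ 0. Put u = (x − 1)/(x + 1) and v = 2u/y. Then v² = (d − 1)·u³ + 2(d + 1)·u² + (d − 1)·u, i.e. (u, v) lies on the Montgomery-form curve birationally equivalent to the Edwards curve. -/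
theorem stmt12_general (F : Type*) [Field F] (d : F)
    (x y : F) (hxy : x ^ 2 + y ^ 2 = 1 + d * x ^ 2 * y ^ 2)
    (hx : x ≠ -1) (hy : y ≠ 0) :
    (2 * ((x - 1) / (x + 1)) / y) ^ 2 =
      (d - 1) * ((x - 1) / (x + 1)) ^ 3 + 2 * (d + 1) * ((x - 1) / (x + 1)) ^ 2
        + (d - 1) * ((x - 1) / (x + 1)) := by
  have hx1 : x + 1 ≠ 0 := fun h => hx (eq_neg_of_add_eq_zero_left h)
  set u := (x - 1) / (x + 1) with hu
  have hcurve : (x - 1) * (x + 1) = y ^ 2 * (d * x ^ 2 - 1) := by linear_combination hxy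
  have hrhs : (d - 1) * u ^ 3 + 2 * (d + 1) * u ^ 2 + (d - 1) * u
      = 4 * u * (d * x ^ 2 - 1) / (x + 1) ^ 2 := by
    rw [hu]; field_simp; ring
  rw [hrhs, hu]
  field_simp
  linear_combination 4 * (x - 1) * hcurve

theorem stmt12 (F : Type*) [Field F] (hchar : ringChar F ≠ 2) (d : F) (hd1 : d ≠ 1)
    (x y : F) (hxy : x ^ 2 + y ^ 2 = 1 + d * x ^ 2 * y ^ 2)
    (hx : x ≠ -1) (hy : y ≠ 0) :
    (2 * ((x - 1) / (x + 1)) / y) ^ 2 =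
      (d - 1) * ((x - 1) / (x + 1)) ^ 3 + 2 * (d + 1) * ((x - 1) / (x + 1)) ^ 2
        + (d - 1) * ((x - 1) / (x + 1)) :=
  stmt12_general F d x y hxy hx hy
end

section
/- Let F be a field of characteristic ≠ 2, let d ∈ F, and let (u, v) ∈ F × F satisfy v² = (d − 1)·u³ + 2(d + 1)·u² + (d − 1)·u with v ≠ 0 and u ≠ 1. Put x = (1 + u)/(1 − u) and y = 2u/v. Then x² + y² = 1 + d·x²·y², i.e. (x, y) lies on the Edwards curve with coefficient d. -/
theorem stmt13 (F : Type*) [Field F] (hchar : ringChar F ≠ 2) (d : F)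
    (u v : F) (huv : v ^ 2 = (d - 1) * u ^ 3 + 2 * (d + 1) * u ^ 2 + (d - 1) * u)
    (hv : v ≠ 0) (hu : u ≠ 1) :
    ((1 + u) / (1 - u)) ^ 2 + (2 * u / v) ^ 2 =
      1 + d * ((1 + u) / (1 - u)) ^ 2 * (2 * u / v) ^ 2 := by
  have h1 : (1 : F) - u ≠ 0 := sub_ne_zero.mpr (Ne.symm hu)
  field_simp
  linear_combination (4 * u) * huv
end

section
/- Let R be a commutative ring, d ∈ R, and m a natural number. Then the coefficient of X^{2m} in the polynomial ((X² − 1)·(d·X² − 1))^m ∈ R[X] equals (−1)^m · Σ_{j=0}^{m} binom(m, j)² · d^j. -/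
/-!
The polynomial is the image of `((X - 1) * (d X - 1)) ^ m` under `X ↦ X²`, so the coefficient is that
of `X ^ m` in `(X - 1) ^ m * (d X - 1) ^ m`. Expanding both factors binomially, the term `d ^ j` comes
with `binom(m, m - j) * binom(m, j) = binom(m, j) ^ 2` and the sign `(-1) ^ j * (-1) ^ (m - j)`.
-/

open Finset Polynomial

theorem Polynomial.coeff_C_mul_X_add_C_pow {R : Type*} [CommSemiring R] (a b : R) (n k : ℕ) :
    ((C a * X + C b) ^ n).coeff k = a ^ k * b ^ (n - k) * (n.choose k : R) := by
  have : (C a * X + C b) ^ n = ((X + C b) ^ n).comp (C a * X) := by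
    simp only [pow_comp, add_comp, X_comp, C_comp]
  rw [this, comp_C_mul_X_coeff, coeff_X_add_C_pow]
  ring

theorem stmt17 (R : Type*) [CommRing R] (d : R) (m : ℕ) :
    (((X ^ 2 - 1) * (C d * X ^ 2 - 1)) ^ m : R[X]).coeff (2 * m) =
      (-1 : R) ^ m * ∑ j ∈ range (m + 1), (m.choose j : R) ^ 2 * d ^ j := by
  have hexpand : ((X ^ 2 - 1) * (C d * X ^ 2 - 1) : R[X]) ^ m =
      expand R 2 ((C 1 * X + C (-1)) ^ m * (C d * X + C (-1)) ^ m) := by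
    simp [mul_pow, sub_eq_add_neg]
  rw [hexpand, coeff_expand_mul' two_pos, coeff_mul, ← Nat.sum_antidiagonal_swap,
    Nat.sum_antidiagonal_eq_sum_range_succ_mk, mul_sum]
  refine sum_congr rfl fun j hj => ?_
  have hjm : j ≤ m := Nat.lt_succ_iff.mp (mem_range.mp hj)
  simp only [Prod.swap_prod_mk, coeff_C_mul_X_add_C_pow, Nat.sub_sub_self hjm, Nat.choose_symm hjm]
  rw [← pow_mul_pow_sub (-1 : R) hjm]
  ring
end

section
/- Let p be a prime with p ≡ 3 (mod 4) and set m = (p − 1)/2. Then Σ_{j=0}^{m} binom(m, j) · ∏_{i=1}^{m} (j + i) ≡ 0 (mod p). -/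
open Finset

/-!
Put `m = (p - 1) / 2` and `F j = ∏_{i=1}^m (j + i)`. Since `p = 2m + 1`, the factor `m - j + i` of
`F (m - j)` is `-(j + (m + 1 - i))` modulo `p`, so `F (m - j) ≡ (-1)^m F j = -F j` because `m` is odd
when `p ≡ 3 (mod 4)`. As `binom(m, m - j) = binom(m, j)`, reversing the order of summation turns the
sum into its own negative, and `p` is odd.
-/

theorem prod_Icc_add_eq_neg_one_pow_mul {R : Type*} [CommRing R] {x y : R} (m : ℕ)
    (h : x + y + (m + 1) = 0) :
    ∏ i ∈ Icc 1 m, (y + i) = (-1) ^ m * ∏ i ∈ Icc 1 m, (x + i) := by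
  have hrefl : ∏ i ∈ Icc 1 m, (y + i) = ∏ i ∈ Icc 1 m, -(x + (m + 1 - i : ℕ)) := by
    refine prod_congr rfl fun i hi => ?_
    rw [Nat.cast_sub (by grind)]
    push_cast
    linear_combination h
  rw [hrefl, prod_neg, Nat.card_Icc, Nat.add_sub_cancel]
  congr 1
  exact prod_nbij' (fun i => m + 1 - i) (fun i => m + 1 - i) (by grind)
    (by grind) (by grind) (by grind) fun _ _ => rfl

theorem sum_range_eq_zero_of_reflect_eq_neg {R : Type*} [CommRing R] [NoZeroDivisors R]
    (h2 : (2 : R) ≠ 0) {m : ℕ} {g : ℕ → R} (hg : ∀ j ≤ m, g (m - j) = -g j) :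
    ∑ j ∈ range (m + 1), g j = 0 := by
  have hneg : ∑ j ∈ range (m + 1), g j = -∑ j ∈ range (m + 1), g j :=
    calc ∑ j ∈ range (m + 1), g j = ∑ j ∈ range (m + 1), g (m - j) := (sum_range_reflect g _).symm
      _ = ∑ j ∈ range (m + 1), -g j :=
        sum_congr rfl fun j hj => hg j (Nat.lt_succ_iff.mp (mem_range.mp hj))
      _ = -∑ j ∈ range (m + 1), g j := sum_neg_distrib _
  have htwo : 2 * ∑ j ∈ range (m + 1), g j = 0 := by linear_combination hneg
  exact (mul_eq_zero.mp htwo).resolve_left h2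

theorem stmt19 (p : ℕ) (hp : p.Prime) (hp4 : p % 4 = 3) :
    (∑ j ∈ range ((p - 1) / 2 + 1),
        ((p - 1) / 2).choose j * ∏ i ∈ Icc 1 ((p - 1) / 2), (j + i)) ≡ 0 [MOD p] := by
  have : Fact p.Prime := ⟨hp⟩
  set m := (p - 1) / 2
  have hm : Odd m := Nat.odd_iff.mpr (by omega)
  rw [Nat.modEq_zero_iff_dvd, ← ZMod.natCast_eq_zero_iff]
  push_cast
  refine sum_range_eq_zero_of_reflect_eq_neg ?_ fun j hj => ?_
  · exact Ring.two_ne_zero (by rw [ZMod.ringChar_zmod_n]; omega)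
  · have hsum : ((j : ℕ) : ZMod p) + ((m - j : ℕ) : ZMod p) + (m + 1) = 0 := by
      have hp_eq : j + (m - j) + (m + 1) = p := by omega
      simpa using congrArg (Nat.cast : ℕ → ZMod p) hp_eq
    rw [Nat.choose_symm hj, prod_Icc_add_eq_neg_one_pow_mul m hsum, hm.neg_one_pow]
    ring
end
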